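/- Let m ≥ 2, λ ∈ 𝔽_q^× and 0 ≤ r < hn, and let τ_r ∈ Gal(𝔽_{q^n}/𝔽_p) be u ↦ u^{p^r}. Then the number of monic irreducible polynomials of degree m in 𝔽_q[x] fixed by (λ,τ_r) is |Fix(λ,τ_r)| = (1/m) · ∑_{j=0}^{m−1} ∑_{d | m} μ(d) · N_{r,j}(m/d, λ). -/

import Mathlib

noncomputable section


/-- `N_{r,j}(s,λ)`: the number of `a ∈ 𝔽_{q^s}ˣ` (inside the ambient field `E = 𝔽_{q^m}`)
with `a^{p^r} = λ·a^{q^j}`, where `q = p^h`. -/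
def Ncount (p h : ℕ) (F E : Type*) [Field F] [Field E] [Algebra F E]
    (lam : F) (r j s : ℕ) : ℕ :=
  Nat.card {a : E // a ≠ 0 ∧ a ^ p ^ r = algebraMap F E lam * a ^ (p ^ h) ^ j ∧
    a ^ (p ^ h) ^ s = a}

/-- The action `g^{(λ,τ_r)}(x) = λ^{-m} g^{τ_r}(λx)` on polynomials over `F = 𝔽_q`,
where `τ_r : a ↦ a^{p^r}`. -/
def actFin (p : ℕ) {F : Type*} [Field F] (lam : F) (r m : ℕ) (g : Polynomial F) :
    Polynomial F :=
  ∑ i ∈ g.support, Polynomial.C ((lam ^ m)⁻¹ * g.coeff i ^ p ^ r * lam ^ i) *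
    Polynomial.X ^ i

/-- `I(q,m)`: the monic irreducible polynomials of degree `m` in `F[x]`. -/
def IrrSet (F : Type*) [Field F] (m : ℕ) : Set (Polynomial F) :=
  {g | g.Monic ∧ Irreducible g ∧ g.natDegree = m}

/-- The set of `G`-orbits on `I(q,m)`, where `G = 𝔽_qˣ ⋊ Gal(𝔽_{q^n}/𝔽_p)`. -/
def orbitSet (p h n m : ℕ) (F : Type*) [Field F] : Set (Set (Polynomial F)) :=
  {S | ∃ g ∈ IrrSet F m, S = {g' ∈ IrrSet F m |
    ∃ lam : F, lam ≠ 0 ∧ ∃ r < h * n, g' = actFin p lam r m g}}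

/-!
The roots of `g^{(λ,τ_r)}` are the elements `λ⁻¹ b^{p^r}`, `b` a root of `g`. A monic
irreducible `g` of degree `m` has as roots in `𝔽_{q^m}` the `m` Frobenius conjugates `a^{q^j}`
of any one root `a`, so `g` is fixed by `(λ,τ_r)` iff `a^{p^r} = λ a^{q^j}` for some `j < m`,
and this `j` is unique. Counting roots of the fixed polynomials gives
`m · |Fix(λ,τ_r)| = ∑_{j<m} #{a of degree m : a^{p^r} = λ a^{q^j}}`, and each summand is
obtained from the counts `N_{r,j}(s,λ)` over the subfields `𝔽_{q^s}`, `s ∣ m`, by Möbius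
inversion.
-/

open Polynomial Module Finset

namespace FiniteField

variable {F E : Type*} [Field F] [Fintype F] [Field E] [Algebra F E]

theorem pow_card_pow_eq_self_iff {a : E} (ha : IsIntegral F a) (n : ℕ) :
    a ^ Fintype.card F ^ n = a ↔ (minpoly F a).natDegree ∣ n := by
  rw [(minpoly.irreducible ha).natDegree_dvd_iff_dvd_X_pow_card_pow_sub_X, minpoly.dvd_iff,
    Nat.card_eq_fintype_card]
  simp [sub_eq_zero]

variable [Fintype E]

theorem minpoly_eq_iff_exists_eq_pow {a b : E} :
    minpoly F b = minpoly F a ↔ ∃ i < finrank F E, b = a ^ Fintype.card F ^ i := by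
  rw [Normal.minpoly_eq_iff_mem_orbit]
  constructor
  · rintro ⟨σ, rfl⟩
    obtain ⟨⟨i, hi⟩, rfl⟩ := (bijective_frobeniusAlgEquivOfAlgebraic_pow F E).2 σ
    exact ⟨i, hi, by simp [AlgEquiv.coe_pow, coe_frobeniusAlgEquivOfAlgebraic_iterate]⟩
  · rintro ⟨i, -, rfl⟩
    exact ⟨frobeniusAlgEquivOfAlgebraic F E ^ i, by
      simp [AlgEquiv.coe_pow, coe_frobeniusAlgEquivOfAlgebraic_iterate]⟩

theorem pow_card_pow_injective (i : ℕ) :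
    Function.Injective fun x : E ↦ x ^ Fintype.card F ^ i := by
  have := (frobeniusAlgEquivOfAlgebraic F E ^ i).injective
  simpa [AlgEquiv.coe_pow, coe_frobeniusAlgEquivOfAlgebraic_iterate] using this

theorem splits_of_natDegree_dvd_finrank {g : F[X]} (hg : Irreducible g)
    (h : g.natDegree ∣ finrank F E) : Splits (g.map (algebraMap F E)) := by
  have hdvd : g ∣ X ^ Fintype.card E - X := by
    rw [card_eq_pow_finrank (K := F) (V := E), ← Nat.card_eq_fintype_card]
    exact (hg.natDegree_dvd_iff_dvd_X_pow_card_pow_sub_X (n := finrank F E)).mp h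
  have hX : (X ^ Fintype.card E - X : F[X]) ≠ 0 := X_pow_card_sub_X_ne_zero F Fintype.one_lt_card
  exact (isSplittingField_sub E F).splits.of_dvd (map_ne_zero hX) (map_dvd (algebraMap F E) hdvd)

theorem eq_of_pow_card_pow_eq_of_lt_natDegree {a : E} {i j : ℕ}
    (hi : i < (minpoly F a).natDegree) (hj : j < (minpoly F a).natDegree)
    (h : a ^ Fintype.card F ^ i = a ^ Fintype.card F ^ j) : i = j := by
  wlog hij : i ≤ j generalizing i j
  · exact (this hj hi h.symm (le_of_not_ge hij)).symm
  have hfix : (a ^ Fintype.card F ^ (j - i)) ^ Fintype.card F ^ i = a ^ Fintype.card F ^ i := by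
    rw [← pow_mul, ← pow_add, Nat.sub_add_cancel hij, h]
  have hdvd := (pow_card_pow_eq_self_iff (Algebra.IsIntegral.isIntegral a) _).mp
    (pow_card_pow_injective i hfix)
  have := Nat.eq_zero_of_dvd_of_lt hdvd (by omega)
  omega

theorem finrank_eq_of_card_eq_card_pow {m : ℕ} (h : Fintype.card E = Fintype.card F ^ m) :
    finrank F E = m :=
  Nat.pow_right_injective Fintype.one_lt_card
    ((card_eq_pow_finrank (K := F) (V := E)).symm.trans h)

end FiniteField

section Action

variable {F : Type*} [Field F]

theorem actFin_coeff (p : ℕ) [NeZero p] (lam : F) (r m : ℕ) (g : F[X]) (k : ℕ) :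
    (actFin p lam r m g).coeff k = (lam ^ m)⁻¹ * g.coeff k ^ p ^ r * lam ^ k := by
  rw [actFin, finsetSum_coeff]
  simp only [coeff_C_mul, coeff_X_pow, mul_ite, mul_one, mul_zero, sum_ite_eq]
  split_ifs with hk
  · rfl
  · simp [notMem_support_iff.mp hk, NeZero.ne p]

theorem actFin_monic_and_natDegree {p : ℕ} [NeZero p] {lam : F} (hlam : lam ≠ 0) (r : ℕ)
    {g : F[X]} (hg : g.Monic) :
    (actFin p lam r g.natDegree g).Monic ∧
      (actFin p lam r g.natDegree g).natDegree = g.natDegree := by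
  have hlead : (actFin p lam r g.natDegree g).coeff g.natDegree = 1 := by
    rw [actFin_coeff, hg.coeff_natDegree, one_pow, mul_one, inv_mul_cancel₀ (pow_ne_zero _ hlam)]
  have hle : (actFin p lam r g.natDegree g).natDegree ≤ g.natDegree := by
    refine natDegree_le_iff_coeff_eq_zero.mpr fun k hk ↦ ?_
    rw [actFin_coeff, coeff_eq_zero_of_natDegree_lt (by exact_mod_cast hk),
      zero_pow (NeZero.ne _), mul_zero, zero_mul]
  exact ⟨monic_of_natDegree_le_of_coeff_eq_one _ hle hlead,
    hle.antisymm (le_natDegree_of_ne_zero (hlead ▸ one_ne_zero))⟩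

variable {E : Type*} [Field E] [Algebra F E] {p : ℕ} [Fact p.Prime] [CharP E p]

theorem aeval_actFin {lam : F} (hlam : lam ≠ 0) (r m : ℕ) (g : F[X]) (z : E) :
    aeval ((algebraMap F E lam)⁻¹ * z ^ p ^ r) (actFin p lam r m g) =
      algebraMap F E (lam ^ m)⁻¹ * aeval z g ^ p ^ r := by
  have hlam' : algebraMap F E lam ≠ 0 := (_root_.map_ne_zero _).mpr hlam
  conv_rhs => rw [aeval_def, eval₂_eq_sum, Polynomial.sum_def, ← iterateFrobenius_def, map_sum,
    mul_sum]
  rw [actFin, map_sum]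
  refine sum_congr rfl fun i _ ↦ ?_
  simp only [iterateFrobenius_def, map_mul, aeval_C, map_pow, aeval_X, map_inv₀, mul_pow, inv_pow]
  field_simp

end Action

section Counting

variable {F E : Type*} [Field F] [Fintype F] [Field E] [Fintype E] [Algebra F E]

theorem card_minpoly_eq_of_mem_irrSet [DecidableEq F] {g : F[X]}
    (hg : g ∈ IrrSet F (finrank F E)) :
    #{a : E | minpoly F a = g} = finrank F E := by
  obtain ⟨hmon, hirr, hdeg⟩ := hg
  have hroots : ({a : E | minpoly F a = g} : Finset E) = (g.rootSet E).toFinset := by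
    ext a
    simp only [mem_filter, mem_univ, true_and, Set.mem_toFinset, mem_rootSet, ne_eq,
      hmon.ne_zero, not_false_eq_true]
    exact ⟨fun h ↦ h ▸ minpoly.aeval F a,
      fun h ↦ (minpoly.eq_of_irreducible_of_monic hirr h hmon).symm⟩
  rw [hroots, Set.toFinset_card,
    card_rootSet_eq_natDegree (PerfectField.separable_of_irreducible hirr)
      (FiniteField.splits_of_natDegree_dvd_finrank hirr (hdeg ▸ dvd_rfl)), hdeg]

theorem natCard_irrSet_mul_finrank (P : F[X] → Prop) [DecidablePred P] :
    Nat.card {g // g ∈ IrrSet F (finrank F E) ∧ P g} * finrank F E =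
      #{a : E | (minpoly F a).natDegree = finrank F E ∧ P (minpoly F a)} := by
  classical
  set A : Finset E := {a | (minpoly F a).natDegree = finrank F E ∧ P (minpoly F a)}
  have hint (a : E) : IsIntegral F a := Algebra.IsIntegral.isIntegral a
  have hmem (g : F[X]) : g ∈ A.image (minpoly F) ↔ g ∈ IrrSet F (finrank F E) ∧ P g := by
    constructor
    · simp only [mem_image, A, mem_filter, mem_univ, true_and]
      rintro ⟨a, ⟨hdeg, hP⟩, rfl⟩
      exact ⟨⟨minpoly.monic (hint a), minpoly.irreducible (hint a), hdeg⟩, hP⟩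
    · rintro ⟨hg, hP⟩
      have hpos : 0 < #{a : E | minpoly F a = g} := by
        rw [card_minpoly_eq_of_mem_irrSet hg]
        exact finrank_pos
      obtain ⟨a, ha⟩ := card_pos.mp hpos
      simp only [mem_filter, mem_univ, true_and] at ha
      exact mem_image.mpr ⟨a, by simp [A, ha, hg.2.2, hP], ha⟩
  have hfiber (g : F[X]) (hg : g ∈ A.image (minpoly F)) :
      #{a ∈ A | minpoly F a = g} = finrank F E := by
    rw [← card_minpoly_eq_of_mem_irrSet ((hmem g).mp hg).1]
    congr 1
    ext a
    simp only [A, mem_filter, mem_univ, true_and, and_iff_right_iff_imp]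
    rintro rfl
    exact ⟨((hmem _).mp hg).1.2.2, ((hmem _).mp hg).2⟩
  rw [card_eq_sum_card_image (minpoly F) A, sum_congr rfl hfiber, sum_const, smul_eq_mul,
    Nat.card_congr (Equiv.subtypeEquivRight fun g ↦ (hmem g).symm), Nat.card_eq_fintype_card,
    Fintype.card_coe]

theorem sum_moebius_mul_card_pow_card_pow_eq_self [DecidableEq E] (P : E → Prop)
    [DecidablePred P] {m : ℕ} (hm : 0 < m) :
    ∑ d ∈ m.divisors, (ArithmeticFunction.moebius d : ℤ) *
        #{a : E | P a ∧ a ^ Fintype.card F ^ (m / d) = a} =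
      #{a : E | P a ∧ (minpoly F a).natDegree = m} := by
  have hsum : ∀ n > 0,
      ∑ e ∈ n.divisors, (#{a : E | P a ∧ (minpoly F a).natDegree = e} : ℤ) =
        #{a : E | P a ∧ a ^ Fintype.card F ^ n = a} := by
    intro n hn
    rw [← Nat.cast_sum, ← card_biUnion]
    · congr 2
      ext a
      simp [FiniteField.pow_card_pow_eq_self_iff (Algebra.IsIntegral.isIntegral a), hn.ne',
        and_comm]
    · intro e _ e' _ hne
      exact disjoint_filter.mpr fun a _ h h' ↦ hne (h.2 ▸ h'.2)
  rw [← ArithmeticFunction.sum_eq_iff_sum_smul_moebius_eq.mp hsum m hm,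
    Nat.sum_divisorsAntidiagonal (fun d e ↦ (ArithmeticFunction.moebius d : ℤ) •
      (#{a : E | P a ∧ a ^ Fintype.card F ^ e = a} : ℤ))]
  simp only [smul_eq_mul]

end Counting

section Fixed

variable {F E : Type*} [Field F] [Fintype F] [Field E] [Fintype E] [Algebra F E]

theorem actFin_minpoly_eq_self_iff {p : ℕ} [Fact p.Prime] [CharP E p] {lam : F}
    (hlam : lam ≠ 0) (r : ℕ) {m : ℕ} (hm : finrank F E = m) {a : E}
    (ha : (minpoly F a).natDegree = m) :
    actFin p lam r m (minpoly F a) = minpoly F a ↔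
      ∃ j < m, a ^ p ^ r = algebraMap F E lam * a ^ Fintype.card F ^ j := by
  have hint : IsIntegral F a := Algebra.IsIntegral.isIntegral a
  have hlam' : algebraMap F E lam ≠ 0 := (_root_.map_ne_zero _).mpr hlam
  have hroot :
      aeval ((algebraMap F E lam)⁻¹ * a ^ p ^ r) (actFin p lam r m (minpoly F a)) = 0 := by
    rw [aeval_actFin hlam, minpoly.aeval, zero_pow (pow_ne_zero _ (NeZero.ne p)), mul_zero]
  subst hm
  constructor
  · intro hfix
    rw [hfix] at hroot
    obtain ⟨j, hj, hb⟩ := FiniteField.minpoly_eq_iff_exists_eq_pow.mp <|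
      (minpoly.eq_of_irreducible_of_monic (minpoly.irreducible hint) hroot
        (minpoly.monic hint)).symm
    exact ⟨j, hj, by rw [← hb, mul_inv_cancel_left₀ hlam']⟩
  · rintro ⟨j, hj, hrel⟩
    rw [hrel, inv_mul_cancel_left₀ hlam'] at hroot
    have hdvd := minpoly.dvd F _ hroot
    rw [FiniteField.minpoly_eq_iff_exists_eq_pow.mpr ⟨j, hj, rfl⟩] at hdvd
    obtain ⟨hmon, hdeg⟩ := actFin_monic_and_natDegree (p := p) hlam r (minpoly.monic hint)
    rw [ha] at hmon hdeg
    exact eq_of_monic_of_dvd_of_natDegree_le (minpoly.monic hint) hmon hdvd (by rw [hdeg, ha])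

theorem sum_card_eq_mul_pow_card_pow_eq_card_exists [DecidableEq E] (f : E → E) {c : E}
    (hc : c ≠ 0) {m : ℕ} (hm : 2 ≤ m) :
    ∑ j ∈ range m, #{a : E | (a ≠ 0 ∧ f a = c * a ^ Fintype.card F ^ j) ∧
        (minpoly F a).natDegree = m} =
      #{a : E | (minpoly F a).natDegree = m ∧ ∃ j < m, f a = c * a ^ Fintype.card F ^ j} := by
  rw [← card_biUnion]
  · congr 1
    ext a
    simp only [mem_biUnion, mem_range, mem_filter, mem_univ, true_and]
    constructor
    · rintro ⟨j, hj, ⟨-, hrel⟩, hdeg⟩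
      exact ⟨hdeg, j, hj, hrel⟩
    · rintro ⟨hdeg, j, hj, hrel⟩
      refine ⟨j, hj, ⟨?_, hrel⟩, hdeg⟩
      rintro rfl
      rw [minpoly.zero, natDegree_X] at hdeg
      omega
  · intro i hi j hj hij
    refine disjoint_filter.mpr fun a _ ⟨⟨_, hi'⟩, hdeg⟩ ⟨⟨_, hj'⟩, _⟩ ↦ hij ?_
    exact FiniteField.eq_of_pow_card_pow_eq_of_lt_natDegree (hdeg ▸ mem_range.mp hi)
      (hdeg ▸ mem_range.mp hj) (mul_left_cancel₀ hc (hi'.symm.trans hj'))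

end Fixed

theorem petit_stmt17_general (p h m : ℕ) (hp : p.Prime) (hm : 2 ≤ m)
    (F E : Type*) [Field F] [Field E] [Fintype F] [Fintype E] [Algebra F E]
    (hF : Fintype.card F = p ^ h) (hE : Fintype.card E = p ^ (h * m))
    (lam : F) (hlam : lam ≠ 0) (r : ℕ) :
    (Nat.card {g : Polynomial F // g ∈ IrrSet F m ∧ actFin p lam r m g = g} : ℚ) =
      (1 / (m : ℚ)) * ∑ j ∈ Finset.range m, ∑ d ∈ m.divisors,
        (ArithmeticFunction.moebius d : ℚ) *
          (Ncount p h F E lam r j (m / d) : ℚ) := by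
  -- fixed instances rather than `classical`, so that the filters agree with those of the lemmas
  have := Classical.decEq F
  have := Classical.decEq E
  have : Fact p.Prime := ⟨hp⟩
  have : CharP E p := charP_of_card_eq_prime_pow hE
  have hfin : finrank F E = m :=
    FiniteField.finrank_eq_of_card_eq_card_pow (by rw [hE, hF, pow_mul])
  have hN (j s : ℕ) : Ncount p h F E lam r j s = #{a : E | (a ≠ 0 ∧
      a ^ p ^ r = algebraMap F E lam * a ^ Fintype.card F ^ j) ∧ a ^ Fintype.card F ^ s = a} := by
    rw [Ncount, Nat.card_eq_fintype_card, Fintype.card_subtype, hF]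
    simp only [and_assoc]
  have hmob (j : ℕ) : ∑ d ∈ m.divisors, (ArithmeticFunction.moebius d : ℚ) *
      (Ncount p h F E lam r j (m / d) : ℚ) = #{a : E | (a ≠ 0 ∧
        a ^ p ^ r = algebraMap F E lam * a ^ Fintype.card F ^ j) ∧
          (minpoly F a).natDegree = m} := by
    simp only [hN]
    exact_mod_cast sum_moebius_mul_card_pow_card_pow_eq_self (F := F) (E := E) _
      (by omega : 0 < m)
  have hcount := natCard_irrSet_mul_finrank (E := E) fun g ↦ actFin p lam r m g = g
  rw [hfin, filter_congr fun a _ ↦ and_congr_right (actFin_minpoly_eq_self_iff hlam r hfin),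
    ← sum_card_eq_mul_pow_card_pow_eq_card_exists _ ((_root_.map_ne_zero _).mpr hlam) hm]
    at hcount
  simp only [hmob]
  rw [← Nat.cast_sum, ← hcount]
  push_cast
  field_simp

/-- **Statement 17.** The number of monic irreducible polynomials of degree `m` in
`𝔽_q[x]` fixed by `(λ, τ_r)` is `(1/m) ∑_{j<m} ∑_{d∣m} μ(d) N_{r,j}(m/d, λ)`. -/
theorem petit_stmt17 (p h n m : ℕ) (hp : p.Prime) (hh : 1 ≤ h) (hn : 2 ≤ n) (hm : 2 ≤ m)
    (F E : Type*) [Field F] [Field E] [Fintype F] [Fintype E] [Algebra F E]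
    (hF : Fintype.card F = p ^ h) (hE : Fintype.card E = p ^ (h * m))
    (lam : F) (hlam : lam ≠ 0) (r : ℕ) (hr : r < h * n) :
    (Nat.card {g : Polynomial F // g ∈ IrrSet F m ∧ actFin p lam r m g = g} : ℚ) =
      (1 / (m : ℚ)) * ∑ j ∈ Finset.range m, ∑ d ∈ m.divisors,
        (ArithmeticFunction.moebius d : ℚ) *
          (Ncount p h F E lam r j (m / d) : ℚ) :=
  petit_stmt17_general p h m hp hm F E hF hE lam hlam r
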